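/- arXiv:2508.07504 — 5 statements merged into one kernel-verified Lean document; each statement's English description precedes it below -/
import Mathlib

section
/- For the cyclic group π = Z/n, the dual Hom_Z(Iπ, Z) of the augmentation ideal Iπ (the kernel of the augmentation map Zπ → Z) is isomorphic to Iπ as a Zπ-module. -/
open scoped TensorProduct

namespace Paper

variable {π G H : Type*} [Group π] [Group G] [Group H]

/-- The `v`-twisted augmentation map `ℤπ → ℤ`, `g ↦ v g`. -/
noncomputable def twistedAug (v : π →* ℤˣ) : MonoidAlgebra ℤ π →ₐ[ℤ] ℤ :=
  MonoidAlgebra.lift ℤ ℤ π ((Units.coeHom ℤ).comp v)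

/-- The `v`-twisted augmentation ideal `Iπ^v`. -/
noncomputable def twistedAugIdeal (v : π →* ℤˣ) : Ideal (MonoidAlgebra ℤ π) :=
  RingHom.ker (twistedAug v).toRingHom

/-- The (untwisted) augmentation ideal `Iπ`. -/
noncomputable def augIdeal (π : Type*) [Group π] : Ideal (MonoidAlgebra ℤ π) :=
  twistedAugIdeal (1 : π →* ℤˣ)

/-- Scalar multiplication by a fixed element of the group ring, as a `ℤ`-linear map. -/
noncomputable def smulMap (r : MonoidAlgebra ℤ π) (M : Type*) [AddCommGroup M]
    [Module (MonoidAlgebra ℤ π) M] : M →ₗ[ℤ] M :=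
  (DistribMulAction.toAddMonoidHom M r).toIntLinearMap

/-- `g ↦ w(g)·g⁻¹`, as a monoid hom to the multiplicative opposite of the group ring. -/
noncomputable def tauHom (w : π →* ℤˣ) : π →* (MonoidAlgebra ℤ π)ᵐᵒᵖ where
  toFun g := MulOpposite.op (MonoidAlgebra.single g⁻¹ ((w g : ℤ)))
  map_one' := by
    simp [MonoidAlgebra.one_def]
  map_mul' g h := by
    rw [show MulOpposite.op (MonoidAlgebra.single (g⁻¹ : π) ((w g : ℤ))) *
        MulOpposite.op (MonoidAlgebra.single (h⁻¹ : π) ((w h : ℤ))) =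
        MulOpposite.op (MonoidAlgebra.single (h⁻¹ : π) ((w h : ℤ)) *
          MonoidAlgebra.single (g⁻¹ : π) ((w g : ℤ))) from rfl]
    rw [MonoidAlgebra.single_mul_single]
    simp [mul_inv_rev, mul_comm]

/-- The `w`-twisted involution of the group ring, as an algebra map to the opposite ring. -/
noncomputable def tau (w : π →* ℤˣ) :
    MonoidAlgebra ℤ π →ₐ[ℤ] (MonoidAlgebra ℤ π)ᵐᵒᵖ :=
  MonoidAlgebra.lift ℤ _ π (tauHom w)

/-- The `w`-twisted involution `x ↦ x̄` of the group ring. -/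
noncomputable def conj (w : π →* ℤˣ) (x : MonoidAlgebra ℤ π) : MonoidAlgebra ℤ π :=
  (tau w x).unop

/-- Whitehead's `Γ(A)`, realized as the symmetric elements of `A ⊗[ℤ] A`. -/
noncomputable def Gamma (A : Type*) [AddCommGroup A] : Submodule ℤ (A ⊗[ℤ] A) :=
  LinearMap.eqLocus (TensorProduct.comm ℤ A A).toLinearMap LinearMap.id

/-- The subgroup of relations defining the coinvariants `ℤ^w ⊗_{ℤπ} Γ(A)` of `Γ(A)`
under the `w`-twisted diagonal action. -/
noncomputable def gammaRel (w : π →* ℤˣ) (A : Type*) [AddCommGroup A]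
    [Module (MonoidAlgebra ℤ π) A] : Submodule ℤ (A ⊗[ℤ] A) :=
  Submodule.span ℤ
    {x | ∃ (g : π) (y : A ⊗[ℤ] A), y ∈ Gamma A ∧
      x = TensorProduct.map (smulMap (MonoidAlgebra.of ℤ π g) A)
            (smulMap (MonoidAlgebra.of ℤ π g) A) y - (w g : ℤ) • y}

/-- The pairing underlying the map `B_A : ℤ^w ⊗ Γ(A) → Her^w(A^†)`:
`a ⊗ b ↦ ((f, g) ↦ conj (f a) * g b)`. -/
noncomputable def BMap (w : π →* ℤˣ) (A : Type*) [AddCommGroup A]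
    [Module (MonoidAlgebra ℤ π) A] :
    (A ⊗[ℤ] A) →ₗ[ℤ]
      ((A →ₗ[MonoidAlgebra ℤ π] MonoidAlgebra ℤ π) →
        (A →ₗ[MonoidAlgebra ℤ π] MonoidAlgebra ℤ π) → MonoidAlgebra ℤ π) :=
  TensorProduct.lift <| LinearMap.mk₂ ℤ
    (fun a b => fun f g => conj w (f a) * g b)
    (fun a a' b => by funext f g; simp [conj, map_add, add_mul])
    (fun n a b => by
      funext f g
      simp only [Pi.smul_apply, map_zsmul, conj, MulOpposite.unop_smul, smul_mul_assoc])
    (fun a b b' => by funext f g; simp [map_add, mul_add])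
    (fun n a b => by
      funext f g
      simp only [Pi.smul_apply, map_zsmul, mul_smul_comm])

/-- The relation submodule defining the induced module `Ind_G^π A = ℤπ ⊗_{ℤG} A`. -/
noncomputable def indRel (ι : G →* π) (A : Type*) [AddCommGroup A]
    [Module (MonoidAlgebra ℤ G) A] :
    Submodule (MonoidAlgebra ℤ π) (MonoidAlgebra ℤ π ⊗[ℤ] A) :=
  Submodule.span (MonoidAlgebra ℤ π)
    {z | ∃ (s : G) (a : A),
      z = (MonoidAlgebra.of ℤ π (ι s)) ⊗ₜ[ℤ] a -
          (1 : MonoidAlgebra ℤ π) ⊗ₜ[ℤ] ((MonoidAlgebra.of ℤ G s) • a)}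

/-- The induced module `Ind_G^π A = ℤπ ⊗_{ℤG} A`, as a left `ℤπ`-module. -/
noncomputable abbrev IndMod (ι : G →* π) (A : Type*) [AddCommGroup A]
    [Module (MonoidAlgebra ℤ G) A] :=
  (MonoidAlgebra ℤ π ⊗[ℤ] A) ⧸ indRel ι A

/-- The canonical projection onto the induced module. -/
noncomputable def IndMod.mk (ι : G →* π) (A : Type*) [AddCommGroup A]
    [Module (MonoidAlgebra ℤ G) A] :
    (MonoidAlgebra ℤ π ⊗[ℤ] A) →ₗ[MonoidAlgebra ℤ π] IndMod ι A :=
  (indRel ι A).mkQ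


section AuxStatement0
set_option linter.unusedSectionVars false

lemma aug_single (g : π) (c : ℤ) :
    twistedAug (1 : π →* ℤˣ) (MonoidAlgebra.single g c) = c := by
  simp [twistedAug, MonoidAlgebra.lift_single]

lemma mem_augIdeal_iff (x : MonoidAlgebra ℤ π) :
    x ∈ augIdeal π ↔ twistedAug (1 : π →* ℤˣ) x = 0 := Iff.rfl

/-- `P g = g - 1` as an element of the augmentation ideal. -/
noncomputable def P (g : π) : augIdeal π :=
  ⟨MonoidAlgebra.single g 1 - 1, by
    rw [mem_augIdeal_iff, map_sub, aug_single, map_one, sub_self]⟩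

lemma P_one : P (1 : π) = 0 := by
  simp [P, MonoidAlgebra.one_def]

variable [Fintype π]

lemma univ_sum_single_coeff (x : MonoidAlgebra ℤ π) :
    ∑ g : π, MonoidAlgebra.single g (x.coeff g) = x := by
  apply MonoidAlgebra.coeff_injective
  rw [MonoidAlgebra.coeff_sum]
  simp only [MonoidAlgebra.coeff_single]
  exact Finsupp.univ_sum_single _

open MonoidAlgebra in
lemma aug_eq_sum (x : MonoidAlgebra ℤ π) :
    twistedAug (1 : π →* ℤˣ) x = ∑ g : π, x.coeff g := by
  conv_lhs => rw [← univ_sum_single_coeff x]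
  rw [map_sum]
  exact Finset.sum_congr rfl fun g _ => aug_single g (x.coeff g)

lemma span_P_top : (⊤ : Submodule ℤ (augIdeal π)) ≤
    Submodule.span ℤ (Set.range (fun g : π => P g)) := by
  rintro ⟨x, hx⟩ -
  have hx' : ∑ g : π, x.coeff g = 0 := by rw [← aug_eq_sum]; exact hx
  have hrep : (⟨x, hx⟩ : augIdeal π) = ∑ g : π, (x.coeff g) • P g := by
    apply Subtype.ext
    push_cast [P]
    rw [Finset.sum_congr rfl (fun g _ => smul_sub (x.coeff g) (MonoidAlgebra.single g 1) 1),
      Finset.sum_sub_distrib]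
    simp only [MonoidAlgebra.smul_single', mul_one]
    rw [univ_sum_single_coeff x, ← Finset.sum_smul, hx', zero_smul, sub_zero]
  rw [hrep]
  exact Submodule.sum_mem _ fun g _ =>
    Submodule.smul_mem _ _ (Submodule.subset_span ⟨g, rfl⟩)

lemma P_linearIndependent :
    LinearIndependent ℤ (fun g : {g : π // g ≠ 1} => P g.1) := by
  classical
  rw [linearIndependent_iff']
  intro s f hsum i hi
  have hval : (∑ j ∈ s, f j • P j.1 : augIdeal π).1 = 0 := by rw [hsum]; rfl
  have hval2 : (∑ j ∈ s, MonoidAlgebra.single (j.1 : π) (f j)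
      - (∑ j ∈ s, f j) • (1 : MonoidAlgebra ℤ π)) = 0 := by
    rw [← hval]
    push_cast [P]
    simp only [smul_sub, Finset.sum_sub_distrib, MonoidAlgebra.smul_single', mul_one,
      Finset.sum_smul]
  have := congrArg (fun z : MonoidAlgebra ℤ π => z.coeff i.1) hval2
  simp only [MonoidAlgebra.one_def] at this
  rw [MonoidAlgebra.coeff_sub, Finsupp.sub_apply, MonoidAlgebra.coeff_smul_apply, MonoidAlgebra.coeff_sum,
    Finsupp.finset_sum_apply] at this
  simp only [MonoidAlgebra.coeff_single] at this
  rw [Finsupp.single_apply, if_neg (fun h => i.2 h.symm), smul_zero, sub_zero] at this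
  rw [Finset.sum_eq_single i (fun j hj hne => by
      rw [Finsupp.single_apply, if_neg (fun h => hne (Subtype.ext h))])
    (fun h => absurd hi h)] at this
  rw [Finsupp.single_apply, if_pos rfl] at this
  exact this.symm ▸ rfl

/-- The standard basis `g - 1`, `g ≠ 1`, of the augmentation ideal. -/
noncomputable def bAug : Module.Basis {g : π // g ≠ 1} ℤ (augIdeal π) :=
  Module.Basis.mk P_linearIndependent (by
    refine le_trans span_P_top (Submodule.span_le.mpr ?_)
    rintro - ⟨g, rfl⟩
    by_cases hg : g = 1
    · subst hg; show P (1:π) ∈ _; rw [P_one]; exact Submodule.zero_mem _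
    · exact Submodule.subset_span ⟨⟨g, hg⟩, rfl⟩)

@[simp] lemma bAug_apply (g : {g : π // g ≠ 1}) : (bAug : Module.Basis _ ℤ (augIdeal π)) g = P g.1 :=
  Module.Basis.mk_apply _ _ g

/-- `W g = g·t - g` as an element of the augmentation ideal. -/
noncomputable def WMap (t : π) (g : π) : augIdeal π := P (g * t) - P g

/-- The candidate isomorphism `Hom(Iπ, ℤ) → Iπ`, `f ↦ ∑ g, f (g - 1) • (g·t - g)`. -/
noncomputable def EMap (t : π) : ((augIdeal π) →ₗ[ℤ] ℤ) →ₗ[ℤ] augIdeal π where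
  toFun f := ∑ g : π, f (P g) • WMap t g
  map_add' f₁ f₂ := by simp [add_smul, Finset.sum_add_distrib]
  map_smul' c f := by simp [Finset.smul_sum, mul_smul]

lemma sum_W_zero (t : π) : ∑ g : π, WMap t g = 0 := by
  unfold WMap
  rw [Finset.sum_sub_distrib, sub_eq_zero]
  exact Fintype.sum_equiv (Equiv.mulRight t) _ _ (fun g => rfl)

lemma W_smul (t g₀ u : π) :
    WMap t (g₀ * u) = MonoidAlgebra.of ℤ π g₀ • WMap t u := by
  apply Subtype.ext
  push_cast [WMap, P]
  simp [smul_sub, mul_sub, MonoidAlgebra.single_mul_single, mul_assoc,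
    MonoidAlgebra.of_apply, sub_sub_sub_cancel_right]

lemma smul_P (g₀ g : π) :
    MonoidAlgebra.of ℤ π g₀ • P g = P (g₀ * g) - P g₀ := by
  apply Subtype.ext
  push_cast [P]
  simp [mul_sub, MonoidAlgebra.single_mul_single, MonoidAlgebra.of_apply]

lemma E_equivariant (t g₀ : π) (f : (augIdeal π) →ₗ[ℤ] ℤ) :
    EMap t (f ∘ₗ smulMap (MonoidAlgebra.of ℤ π g₀⁻¹) (augIdeal π)) =
      MonoidAlgebra.of ℤ π g₀ • EMap t f := by
  have step1 : EMap t (f ∘ₗ smulMap (MonoidAlgebra.of ℤ π g₀⁻¹) (augIdeal π)) =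
      ∑ g : π, (f (P (g₀⁻¹ * g)) - f (P g₀⁻¹)) • WMap t g := by
    refine Finset.sum_congr rfl fun g _ => ?_
    have : (f ∘ₗ smulMap (MonoidAlgebra.of ℤ π g₀⁻¹) (augIdeal π)) (P g)
        = f (MonoidAlgebra.of ℤ π g₀⁻¹ • P g) := rfl
    rw [this, smul_P, map_sub]
  rw [step1]
  simp only [sub_smul, Finset.sum_sub_distrib, ← Finset.smul_sum, sum_W_zero, smul_zero,
    sub_zero]
  have step2 : ∑ g : π, f (P (g₀⁻¹ * g)) • WMap t g
      = ∑ u : π, f (P u) • WMap t (g₀ * u) := by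
    refine (Fintype.sum_equiv (Equiv.mulLeft g₀) _ _ fun u => ?_).symm
    simp
  rw [step2]
  have step3 : MonoidAlgebra.of ℤ π g₀ • EMap t f
      = ∑ u : π, MonoidAlgebra.of ℤ π g₀ • (f (P u) • WMap t u) := by
    rw [show EMap t f = ∑ u : π, f (P u) • WMap t u from rfl, Finset.smul_sum]
  rw [step3]
  exact Finset.sum_congr rfl fun u _ => by
    rw [W_smul]; exact smul_comm (f (P u)) (MonoidAlgebra.of ℤ π g₀) (WMap t u)

open scoped Classical in
lemma coord_P (g : {g : π // g ≠ 1}) (h : π) :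
    (bAug.coord g) (P h) = if h = g.1 then 1 else 0 := by
  classical
  by_cases hh : h = 1
  · subst hh
    rw [P_one, map_zero, if_neg (fun e => g.2 e.symm)]
  · rw [← bAug_apply ⟨h, hh⟩, Module.Basis.coord_apply, Module.Basis.repr_self, Finsupp.single_apply]
    simp [Subtype.ext_iff, eq_comm]

lemma E_coord (t : π) (g : {g : π // g ≠ 1}) :
    EMap t ((bAug : Module.Basis _ ℤ (augIdeal π)).coord g) = WMap t g.1 := by
  classical
  rw [show EMap t (bAug.coord g) = ∑ h : π, (bAug.coord g) (P h) • WMap t h from rfl]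
  rw [Finset.sum_congr rfl fun h _ => by rw [coord_P, ite_smul, one_smul, zero_smul]]
  rw [Finset.sum_ite_eq' Finset.univ g.1 (WMap t)]
  rw [if_pos (Finset.mem_univ _)]

lemma W_mem_range (t g : π) : WMap t g ∈ LinearMap.range (EMap t (π := π)) := by
  classical
  by_cases hg : g = 1
  · subst hg
    have h0 := sum_W_zero t
    rw [← Finset.add_sum_erase Finset.univ (WMap t) (Finset.mem_univ 1)] at h0
    rw [eq_neg_of_add_eq_zero_left h0]
    exact neg_mem (Submodule.sum_mem _ fun h hh =>
      ⟨bAug.coord ⟨h, (Finset.mem_erase.mp hh).1⟩,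
        E_coord t ⟨h, (Finset.mem_erase.mp hh).1⟩⟩)
  · exact ⟨bAug.coord ⟨g, hg⟩, E_coord t ⟨g, hg⟩⟩

lemma P_pow_mem (t : π) (k : ℕ) : P (t ^ k) ∈ LinearMap.range (EMap t (π := π)) := by
  induction k with
  | zero => rw [pow_zero, P_one]; exact Submodule.zero_mem _
  | succ k ih =>
      have : P (t ^ (k + 1)) = WMap t (t ^ k) + P (t ^ k) := by
        rw [WMap, ← pow_succ, sub_add_cancel]
      rw [this]
      exact Submodule.add_mem _ (W_mem_range t _) ih

lemma E_surjective (t : π) (ht : ∀ g : π, ∃ k : ℕ, t ^ k = g) :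
    Function.Surjective (EMap t (π := π)) := by
  rw [← LinearMap.range_eq_top, eq_top_iff]
  refine le_trans span_P_top (Submodule.span_le.mpr ?_)
  rintro - ⟨g, rfl⟩
  obtain ⟨k, rfl⟩ := ht g
  exact P_pow_mem t k

lemma E_injective (t : π) (ht : ∀ g : π, ∃ k : ℕ, t ^ k = g) :
    Function.Injective (EMap t (π := π)) := by
  classical
  haveI : Module.Finite ℤ (augIdeal π) := Module.Finite.of_basis (bAug (π := π))
  exact OrzechProperty.injective_of_surjective_of_injective
    (bAug (π := π)).toDualEquiv.symm.toLinearMap (EMap t)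
    (bAug (π := π)).toDualEquiv.symm.injective (E_surjective t ht)

end AuxStatement0

/-- For the cyclic group `π = ℤ/n`, the dual `Hom_ℤ(Iπ, ℤ)` of the
augmentation ideal `Iπ` is isomorphic to `Iπ` as a `ℤπ`-module.  The `ℤπ`-module structure
on the dual is the contragredient one, `(g • f) x = f (g⁻¹ • x)`; an isomorphism of
`ℤπ`-modules is a `ℤ`-linear equivalence intertwining the `π`-actions. -/
theorem dual_of_augIdeal_iso_augIdeal (n : ℕ) [NeZero n] :
    ∃ e : ((augIdeal (Multiplicative (ZMod n))) →ₗ[ℤ] ℤ) ≃ₗ[ℤ]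
        augIdeal (Multiplicative (ZMod n)),
      ∀ (g : Multiplicative (ZMod n))
        (f : (augIdeal (Multiplicative (ZMod n))) →ₗ[ℤ] ℤ),
        e (f ∘ₗ smulMap (MonoidAlgebra.of ℤ (Multiplicative (ZMod n)) g⁻¹)
            (augIdeal (Multiplicative (ZMod n)))) =
          (MonoidAlgebra.of ℤ (Multiplicative (ZMod n)) g) • e f := by
  set t : Multiplicative (ZMod n) := Multiplicative.ofAdd 1 with ht_def
  have ht : ∀ g : Multiplicative (ZMod n), ∃ k : ℕ, t ^ k = g := by
    intro g
    refine ⟨(Multiplicative.toAdd g).val, ?_⟩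
    have : t ^ (Multiplicative.toAdd g).val
        = Multiplicative.ofAdd (((Multiplicative.toAdd g).val : ℕ) • (1 : ZMod n)) := rfl
    rw [this, nsmul_eq_mul, mul_one, ZMod.natCast_rightInverse _]
    rfl
  refine ⟨LinearEquiv.ofBijective (EMap t) ⟨E_injective t ht, E_surjective t ht⟩, ?_⟩
  intro g f
  exact E_equivariant t g f


end Paper
end

section
/- Let π be a group and v : π → {±1} a homomorphism. There is a Zπ-module isomorphism Γ(Iπ^v) ⊕ Zπ ≅ Γ(Zπ), which on the summand Γ(Iπ^v) is induced by the inclusion Iπ^v → Zπ. In particular, Γ(Iπ^v) is a direct summand of Γ(Zπ). -/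
open scoped TensorProduct

namespace Paper

variable {π G H : Type*} [Group π] [Group G] [Group H]

section Aux
variable (v : π →* ℤˣ)

local notation "R" => MonoidAlgebra ℤ π

lemma mem_Gamma_iff {A : Type*} [AddCommGroup A] (z : A ⊗[ℤ] A) :
    z ∈ Gamma A ↔ TensorProduct.comm ℤ A A z = z := Iff.rfl

noncomputable def eps : R →ₗ[ℤ] ℤ := (twistedAug v).toLinearMap

noncomputable def eta : ℤ →ₗ[ℤ] (MonoidAlgebra ℤ π) := Algebra.linearMap ℤ (MonoidAlgebra ℤ π)

lemma mem_tai_iff (x : R) : x ∈ twistedAugIdeal v ↔ eps v x = 0 := RingHom.mem_ker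

lemma eps_eta (n : ℤ) : eps v (eta n) = n := by
  simp [eps, eta, Algebra.linearMap_apply]

/-- projection onto the ideal -/
noncomputable def Pmap : R →ₗ[ℤ] ↥(twistedAugIdeal v) where
  toFun x := ⟨x - eta (eps v x), by
    rw [mem_tai_iff]
    simp [eps_eta]⟩
  map_add' x y := Subtype.ext (by
    simp only [map_add, Submodule.coe_add]; abel)
  map_smul' c x := Subtype.ext (by
    simp only [map_smul, RingHom.id_apply, SetLike.val_smul, SetLike.val_smul_of_tower, smul_sub])

noncomputable def inc : ↥(twistedAugIdeal v) →ₗ[ℤ] R :=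
  ((twistedAugIdeal v).subtype).restrictScalars ℤ

lemma Pmap_inc (a : ↥(twistedAugIdeal v)) : Pmap v (inc v a) = a := by
  ext
  have h : eps v (a : R) = 0 := (mem_tai_iff v _).1 a.2
  simp [Pmap, inc, h]

end Aux

section Aux2
variable (v : π →* ℤˣ)
local notation "R" => MonoidAlgebra ℤ π

/-- diagonal `g ↦ g ⊗ g` as a monoid hom -/
noncomputable def diagHom : π →* (R ⊗[ℤ] R) where
  toFun g := MonoidAlgebra.of ℤ π g ⊗ₜ[ℤ] MonoidAlgebra.of ℤ π g
  map_one' := rfl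
  map_mul' g h := by
    simp [Algebra.TensorProduct.tmul_mul_tmul]

noncomputable def diag : R →ₐ[ℤ] (R ⊗[ℤ] R) :=
  MonoidAlgebra.lift ℤ _ π (diagHom (π := π))

lemma diag_of (g : π) : diag (MonoidAlgebra.of ℤ π g) =
    MonoidAlgebra.of ℤ π g ⊗ₜ[ℤ] MonoidAlgebra.of ℤ π g := by
  simp [diag, diagHom]

/-- twist `g ↦ v(g) g` as a monoid hom -/
noncomputable def twHom : π →* R where
  toFun g := MonoidAlgebra.single g ((v g : ℤ))
  map_one' := by simp [MonoidAlgebra.one_def]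
  map_mul' g h := by
    rw [MonoidAlgebra.single_mul_single]; simp

noncomputable def tw : R →ₐ[ℤ] R := MonoidAlgebra.lift ℤ R π (twHom v)

lemma tw_of (g : π) : tw v (MonoidAlgebra.of ℤ π g) = MonoidAlgebra.single g ((v g : ℤ)) := by
  simp [tw, twHom]

lemma tw_tw (x : R) : tw v (tw v x) = x := by
  have h : (tw v).comp (tw v) = AlgHom.id ℤ R := by
    apply MonoidAlgebra.algHom_ext
    intro g
    show tw v (tw v (MonoidAlgebra.single g 1)) = MonoidAlgebra.single g 1
    have h1 : (MonoidAlgebra.single g (1:ℤ) : R) = MonoidAlgebra.of ℤ π g := rfl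
    rw [h1, tw_of]
    have h2 : (MonoidAlgebra.single g ((v g : ℤ)) : R) = ((v g : ℤ)) • MonoidAlgebra.of ℤ π g := by
      rw [MonoidAlgebra.of_apply, MonoidAlgebra.smul_single']; simp
    rw [h2, map_smul, tw_of, MonoidAlgebra.smul_single']
    simp [MonoidAlgebra.of_apply, Int.units_mul_self]
    exact Subsingleton.elim _ _
  exact DFunLike.congr_fun h x

noncomputable def nu : (R ⊗[ℤ] R) →ₗ[ℤ] R :=
  (TensorProduct.rid ℤ R).toLinearMap ∘ₗ TensorProduct.map LinearMap.id (eps v)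

lemma nu_tmul (a b : R) : nu v (a ⊗ₜ[ℤ] b) = eps v b • a := by
  show (TensorProduct.rid ℤ R) (TensorProduct.map LinearMap.id (eps v) (a ⊗ₜ[ℤ] b)) = _
  rw [TensorProduct.map_tmul]; simp

lemma eps_of (g : π) : eps v (MonoidAlgebra.of ℤ π g) = (v g : ℤ) := by
  simp [eps, twistedAug]

lemma nu_diag (x : R) : nu v (diag x) = tw v x := by
  have h : (nu v) ∘ₗ (diag (π := π)).toLinearMap = (tw v).toLinearMap := by
    apply MonoidAlgebra.lhom_ext'
    intro g
    apply LinearMap.ext_ring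
    show nu v (diag (MonoidAlgebra.single g 1)) = tw v (MonoidAlgebra.single g 1)
    have h1 : (MonoidAlgebra.single g (1:ℤ) : R) = MonoidAlgebra.of ℤ π g := rfl
    rw [h1, diag_of, nu_tmul, tw_of, eps_of, MonoidAlgebra.of_apply,
      MonoidAlgebra.smul_single']
    simp
  exact DFunLike.congr_fun h x

end Aux2

section Aux3
variable (v : π →* ℤˣ)
local notation "R" => MonoidAlgebra ℤ π

lemma comm_map {M N M' N' : Type*} [AddCommGroup M] [AddCommGroup N] [AddCommGroup M']
    [AddCommGroup N'] [Module ℤ M] [Module ℤ N] [Module ℤ M'] [Module ℤ N']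
    (f : M →ₗ[ℤ] M') (g : N →ₗ[ℤ] N') (z : M ⊗[ℤ] N) :
    TensorProduct.comm ℤ M' N' (TensorProduct.map f g z) =
      TensorProduct.map g f (TensorProduct.comm ℤ M N z) := by
  induction z using TensorProduct.induction_on with
  | zero => simp
  | tmul a b => simp
  | add x y hx hy => simp [hx, hy]

lemma diag_symm (x : R) :
    TensorProduct.comm ℤ R R (diag x) = diag x := by
  have h : (TensorProduct.comm ℤ R R).toLinearMap ∘ₗ (diag (π := π)).toLinearMap =
      (diag (π := π)).toLinearMap := by
    apply MonoidAlgebra.lhom_ext'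
    intro g
    apply LinearMap.ext_ring
    show TensorProduct.comm ℤ R R (diag (MonoidAlgebra.single g 1)) =
      diag (MonoidAlgebra.single g 1)
    have h1 : (MonoidAlgebra.single g (1:ℤ) : R) = MonoidAlgebra.of ℤ π g := rfl
    rw [h1, diag_of]
    simp
  exact DFunLike.congr_fun h x

lemma eta_eq (n : ℤ) : (eta (π := π) n) = n • (1 : R) := by
  simp [eta, Algebra.linearMap_apply, Algebra.algebraMap_eq_smul_one]

lemma decomp (w : R ⊗[ℤ] R) :
    TensorProduct.map (inc v ∘ₗ Pmap v) (inc v ∘ₗ Pmap v) w =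
      w - (1 : R) ⊗ₜ[ℤ] nu v (TensorProduct.comm ℤ R R w) - nu v w ⊗ₜ[ℤ] (1 : R)
        + eps v (nu v w) • ((1:R) ⊗ₜ[ℤ] (1:R)) := by
  induction w using TensorProduct.induction_on with
  | zero => simp
  | tmul a b =>
      have hP : ∀ x : R, inc v (Pmap v x) = x - eps v x • (1 : R) := by
        intro x; simp [inc, Pmap, eta_eq]
      simp only [TensorProduct.map_tmul, LinearMap.comp_apply, hP, TensorProduct.comm_tmul,
        nu_tmul, map_smul, smul_eq_mul, TensorProduct.tmul_sub, TensorProduct.sub_tmul,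
        TensorProduct.tmul_smul, ← TensorProduct.smul_tmul', smul_smul]
      module
  | add x y hx hy =>
      simp only [map_add, TensorProduct.tmul_add, TensorProduct.add_tmul, hx, hy, add_smul]
      abel

lemma nu_incinc (y : ↥(twistedAugIdeal v) ⊗[ℤ] ↥(twistedAugIdeal v)) :
    nu v (TensorProduct.map (inc v) (inc v) y) = 0 := by
  induction y using TensorProduct.induction_on with
  | zero => simp
  | tmul a b =>
      have hb : eps v ((b : R)) = 0 := (mem_tai_iff v _).1 b.2
      simp [nu_tmul, inc, hb]
  | add x y hx hy => simp [map_add, hx, hy]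

lemma PP_incinc (y : ↥(twistedAugIdeal v) ⊗[ℤ] ↥(twistedAugIdeal v)) :
    TensorProduct.map (Pmap v) (Pmap v) (TensorProduct.map (inc v) (inc v) y) = y := by
  rw [← LinearMap.comp_apply, ← TensorProduct.map_comp]
  have h : (Pmap v) ∘ₗ (inc v) = LinearMap.id := LinearMap.ext (Pmap_inc v)
  rw [h, TensorProduct.map_id, LinearMap.id_apply]

end Aux3

section Aux4
variable (v : π →* ℤˣ)
local notation "R" => MonoidAlgebra ℤ π

noncomputable def Phi (p : ↥(Gamma ↥(twistedAugIdeal v)) × R) : ↥(Gamma R) :=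
  ⟨TensorProduct.map (inc v) (inc v)
      (p.1 : ↥(twistedAugIdeal v) ⊗[ℤ] ↥(twistedAugIdeal v)) + diag p.2, by
    rw [mem_Gamma_iff, map_add, comm_map, diag_symm,
      (mem_Gamma_iff _).1 p.1.2]⟩

noncomputable def Psi (z : ↥(Gamma R)) : ↥(Gamma ↥(twistedAugIdeal v)) × R :=
  (⟨TensorProduct.map (Pmap v) (Pmap v)
      ((z : R ⊗[ℤ] R) - diag (tw v (nu v (z : R ⊗[ℤ] R)))), by
    rw [mem_Gamma_iff, comm_map, map_sub, diag_symm, (mem_Gamma_iff _).1 z.2]⟩,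
   tw v (nu v (z : R ⊗[ℤ] R)))

lemma Phi_val (p : ↥(Gamma ↥(twistedAugIdeal v)) × R) :
    (Phi v p : R ⊗[ℤ] R) = TensorProduct.map (inc v) (inc v)
      (p.1 : ↥(twistedAugIdeal v) ⊗[ℤ] ↥(twistedAugIdeal v)) + diag p.2 := rfl

lemma nu_Phi (p : ↥(Gamma ↥(twistedAugIdeal v)) × R) :
    nu v (Phi v p : R ⊗[ℤ] R) = tw v p.2 := by
  rw [Phi_val, map_add, nu_incinc, nu_diag, zero_add]

lemma Psi_Phi (p : ↥(Gamma ↥(twistedAugIdeal v)) × R) : Psi v (Phi v p) = p := by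
  refine Prod.ext (Subtype.ext ?_) ?_
  · show TensorProduct.map (Pmap v) (Pmap v)
        ((Phi v p : R ⊗[ℤ] R) - diag (tw v (nu v (Phi v p : R ⊗[ℤ] R)))) = _
    rw [nu_Phi, tw_tw, Phi_val, add_sub_cancel_right, PP_incinc]
  · show tw v (nu v (Phi v p : R ⊗[ℤ] R)) = p.2
    rw [nu_Phi, tw_tw]

lemma Phi_Psi (z : ↥(Gamma R)) : Phi v (Psi v z) = z := by
  apply Subtype.ext
  rw [Phi_val]
  set x' := tw v (nu v (z : R ⊗[ℤ] R)) with hx'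
  set w := (z : R ⊗[ℤ] R) - diag x' with hw
  have hw_comm : TensorProduct.comm ℤ R R w = w := by
    rw [hw, map_sub, diag_symm, (mem_Gamma_iff _).1 z.2]
  have hnuw : nu v w = 0 := by
    rw [hw, map_sub, nu_diag, hx', tw_tw, sub_self]
  show TensorProduct.map (inc v) (inc v) (TensorProduct.map (Pmap v) (Pmap v) w) + diag x' =
    (z : R ⊗[ℤ] R)
  rw [← LinearMap.comp_apply, ← TensorProduct.map_comp, decomp, hw_comm, hnuw]
  simp [hw]

lemma Phi_add (p q : ↥(Gamma ↥(twistedAugIdeal v)) × R) :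
    Phi v (p + q) = Phi v p + Phi v q := by
  apply Subtype.ext
  show (Phi v (p + q) : R ⊗[ℤ] R) = (Phi v p : R ⊗[ℤ] R) + (Phi v q : R ⊗[ℤ] R)
  rw [Phi_val, Phi_val, Phi_val]
  simp only [Prod.fst_add, Prod.snd_add, Submodule.coe_add, map_add]
  abel

lemma incinc_smul (g : π) (y : ↥(twistedAugIdeal v) ⊗[ℤ] ↥(twistedAugIdeal v)) :
    TensorProduct.map (inc v) (inc v)
      (TensorProduct.map (smulMap (MonoidAlgebra.of ℤ π g) ↥(twistedAugIdeal v))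
        (smulMap (MonoidAlgebra.of ℤ π g) ↥(twistedAugIdeal v)) y) =
    TensorProduct.map (smulMap (MonoidAlgebra.of ℤ π g) R)
      (smulMap (MonoidAlgebra.of ℤ π g) R) (TensorProduct.map (inc v) (inc v) y) := by
  rw [← LinearMap.comp_apply, ← TensorProduct.map_comp, ← LinearMap.comp_apply,
    ← TensorProduct.map_comp]
  congr 1

lemma tmul_mul_map (g : π) (z : R ⊗[ℤ] R) :
    (MonoidAlgebra.of ℤ π g ⊗ₜ[ℤ] MonoidAlgebra.of ℤ π g) * z =
      TensorProduct.map (smulMap (MonoidAlgebra.of ℤ π g) R)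
        (smulMap (MonoidAlgebra.of ℤ π g) R) z := by
  induction z using TensorProduct.induction_on with
  | zero => simp
  | tmul a b =>
      rw [Algebra.TensorProduct.tmul_mul_tmul, TensorProduct.map_tmul]
      rfl
  | add x y hx hy => rw [mul_add, map_add, hx, hy]

lemma diag_mul (g : π) (x : R) :
    diag (MonoidAlgebra.of ℤ π g * x) =
      TensorProduct.map (smulMap (MonoidAlgebra.of ℤ π g) R)
        (smulMap (MonoidAlgebra.of ℤ π g) R) (diag x) := by
  rw [map_mul, diag_of, tmul_mul_map]

end Aux4

/-- Let `π` be a group and `v : π → {±1}` a homomorphism.  There is a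
`ℤπ`-module isomorphism `Γ(Iπ^v) ⊕ ℤπ ≅ Γ(ℤπ)` which on the summand `Γ(Iπ^v)` is induced
by the inclusion `Iπ^v → ℤπ`.  Here `Γ` is Whitehead's quadratic functor, realized as the
symmetric elements of the tensor square, with the diagonal `π`-action on `Γ`-summands and
the left regular action on `ℤπ`; the isomorphism is an additive bijection which is
`π`-equivariant and restricts on `Γ(Iπ^v)` to the inclusion-induced map. -/
theorem gamma_augIdeal_sum_iso {π : Type*} [Group π] (v : π →* ℤˣ) :
    ∃ e : (↥(Gamma ↥(twistedAugIdeal v)) × MonoidAlgebra ℤ π) ≃+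
        ↥(Gamma (MonoidAlgebra ℤ π)),
      (∀ (g : π) (p q : ↥(Gamma ↥(twistedAugIdeal v)) × MonoidAlgebra ℤ π),
        ((q.1 : ↥(twistedAugIdeal v) ⊗[ℤ] ↥(twistedAugIdeal v)) =
            TensorProduct.map (smulMap (MonoidAlgebra.of ℤ π g) ↥(twistedAugIdeal v))
              (smulMap (MonoidAlgebra.of ℤ π g) ↥(twistedAugIdeal v))
              (p.1 : ↥(twistedAugIdeal v) ⊗[ℤ] ↥(twistedAugIdeal v)) ∧
          q.2 = MonoidAlgebra.of ℤ π g * p.2) →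
        ((e q : MonoidAlgebra ℤ π ⊗[ℤ] MonoidAlgebra ℤ π) =
          TensorProduct.map (smulMap (MonoidAlgebra.of ℤ π g) (MonoidAlgebra ℤ π))
            (smulMap (MonoidAlgebra.of ℤ π g) (MonoidAlgebra ℤ π))
            (e p : MonoidAlgebra ℤ π ⊗[ℤ] MonoidAlgebra ℤ π))) ∧
      (∀ y : ↥(Gamma ↥(twistedAugIdeal v)),
        (e (y, 0) : MonoidAlgebra ℤ π ⊗[ℤ] MonoidAlgebra ℤ π) =
          TensorProduct.map (((twistedAugIdeal v).subtype).restrictScalars ℤ)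
            (((twistedAugIdeal v).subtype).restrictScalars ℤ)
            (y : ↥(twistedAugIdeal v) ⊗[ℤ] ↥(twistedAugIdeal v))) := by
  refine ⟨AddEquiv.mk' ⟨Phi v, Psi v, Psi_Phi v, Phi_Psi v⟩ (Phi_add v),
    fun g p q h => ?_, fun y => ?_⟩
  · obtain ⟨h1, h2⟩ := h
    show (Phi v q : MonoidAlgebra ℤ π ⊗[ℤ] MonoidAlgebra ℤ π) =
      TensorProduct.map (smulMap (MonoidAlgebra.of ℤ π g) (MonoidAlgebra ℤ π))
        (smulMap (MonoidAlgebra.of ℤ π g) (MonoidAlgebra ℤ π))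
        (Phi v p : MonoidAlgebra ℤ π ⊗[ℤ] MonoidAlgebra ℤ π)
    rw [Phi_val, Phi_val, h1, h2, incinc_smul, diag_mul, map_add]
  · show (Phi v (y, 0) : MonoidAlgebra ℤ π ⊗[ℤ] MonoidAlgebra ℤ π) = _
    rw [Phi_val]
    show TensorProduct.map (inc v) (inc v) _ + diag (0 : MonoidAlgebra ℤ π) = _
    rw [map_zero, add_zero]
    rfl

end Paper
end

section
/- Let π be an infinite group, v : π → {±1} a homomorphism, and suppose H¹(π; Zπ^v) = 0. Then the w-twisted dual (Iπ^v)^† := Hom_{Zπ}(Iπ^v, Zπ) is isomorphic to Zπ as a Zπ-module. -/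
open scoped TensorProduct

namespace Paper

variable {π G H : Type*} [Group π] [Group G] [Group H]

/-- The `v`-twisted left regular representation of `π` on its group ring `ℤπ`:
`g` acts by `v(g)` times left multiplication by `g`.  This is the representation whose
underlying `ℤπ`-module is `ℤπ^v`. -/
noncomputable def twistedRegular {π : Type*} [Group π] (v : π →* ℤˣ) :
    Representation ℤ π (MonoidAlgebra ℤ π) where
  toFun g := ((v g : ℤ)) • (LinearMap.mulLeft ℤ (MonoidAlgebra.of ℤ π g))
  map_one' := by
    ext r
    simp
  map_mul' g h := by
    ext r
    simp [Module.End.mul_apply, mul_assoc, mul_smul_comm, smul_smul, Units.val_mul]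


section Aux

open MonoidAlgebra CategoryTheory

variable {π : Type} [Group π]

theorem twistedAug_single (v : π →* ℤˣ) (g : π) (c : ℤ) :
    twistedAug v (MonoidAlgebra.single g c) = c * (v g : ℤ) := by
  simp [twistedAug, MonoidAlgebra.lift_single]

/-- `u_g = g - v(g)`. -/
noncomputable def uElt (v : π →* ℤˣ) (g : π) : MonoidAlgebra ℤ π :=
  MonoidAlgebra.single g 1 - MonoidAlgebra.single 1 ((v g : ℤ))

theorem uElt_mem (v : π →* ℤˣ) (g : π) : uElt v g ∈ twistedAugIdeal v := by
  have : twistedAug v (uElt v g) = 0 := by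
    simp [uElt, map_sub, twistedAug_single]
  simpa [twistedAugIdeal, RingHom.mem_ker] using this

theorem uElt_mul (v : π →* ℤˣ) (g h : π) :
    uElt v (g * h) =
      MonoidAlgebra.single g (1 : ℤ) * uElt v h + ((v h : ℤ)) • uElt v g := by
  simp only [uElt, mul_sub, MonoidAlgebra.single_mul_single, one_mul, mul_one, smul_sub,
    MonoidAlgebra.smul_single', map_mul]
  rw [show ((v g * v h : ℤˣ) : ℤ) = (v h : ℤ) * (v g : ℤ) by
    rw [Units.val_mul, mul_comm]]
  abel

theorem single_one_mul' (c : ℤ) (x : MonoidAlgebra ℤ π) :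
    MonoidAlgebra.single (1 : π) c * x = c • x := by
  have : (MonoidAlgebra.single (1 : π) c) = c • (1 : MonoidAlgebra ℤ π) := by
    rw [MonoidAlgebra.one_def, MonoidAlgebra.smul_single', mul_one]
  rw [this, smul_mul_assoc, one_mul]

theorem uElt_mul_right (v : π →* ℤˣ) (g : π) (x : MonoidAlgebra ℤ π) :
    uElt v g * x = MonoidAlgebra.single g (1 : ℤ) * x - ((v g : ℤ)) • x := by
  rw [uElt, sub_mul, single_one_mul']

theorem mem_span_uElt (v : π →* ℤˣ) {x : MonoidAlgebra ℤ π}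
    (hx : x ∈ twistedAugIdeal v) :
    x ∈ Submodule.span ℤ (Set.range (uElt v)) := by
  have key : ∀ y : MonoidAlgebra ℤ π,
      y - MonoidAlgebra.single 1 (twistedAug v y) ∈
        Submodule.span ℤ (Set.range (uElt v)) := by
    intro y
    induction y using MonoidAlgebra.induction_on with
    | of g =>
        have : (MonoidAlgebra.of ℤ π g : MonoidAlgebra ℤ π) -
            MonoidAlgebra.single 1 (twistedAug v (MonoidAlgebra.of ℤ π g)) = uElt v g := by
          simp [MonoidAlgebra.of_apply, twistedAug_single, uElt]
        rw [this]
        exact Submodule.subset_span ⟨g, rfl⟩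
    | add f g hf hg =>
        have : f + g - MonoidAlgebra.single 1 (twistedAug v (f + g)) =
            (f - MonoidAlgebra.single 1 (twistedAug v f)) +
            (g - MonoidAlgebra.single 1 (twistedAug v g)) := by
          rw [map_add, MonoidAlgebra.single_add]; abel
        rw [this]
        exact Submodule.add_mem _ hf hg
    | smul r f hf =>
        have : r • f - MonoidAlgebra.single 1 (twistedAug v (r • f)) =
            r • (f - MonoidAlgebra.single 1 (twistedAug v f)) := by
          rw [map_smul, smul_sub, MonoidAlgebra.smul_single', smul_eq_mul]
        rw [this]
        exact Submodule.smul_mem _ _ hf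
  have hx0 : twistedAug v x = 0 := by
    simpa [twistedAugIdeal, RingHom.mem_ker] using hx
  have := key x
  rwa [hx0, MonoidAlgebra.single_zero, sub_zero] at this

theorem eq_zero_of_forall_single_mul [Infinite π] (v : π →* ℤˣ)
    {r : MonoidAlgebra ℤ π}
    (hr : ∀ g : π, MonoidAlgebra.single g (1 : ℤ) * r = ((v g : ℤ)) • r) :
    r = 0 := by
  by_contra h
  obtain ⟨a, ha⟩ := Finsupp.support_nonempty_iff.2 (mt MonoidAlgebra.coeff_eq_zero.1 h)
  have hmem : ∀ g : π, g * a ∈ r.coeff.support := by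
    intro g
    have h1 : (MonoidAlgebra.single g (1 : ℤ) * r).coeff (g * a) = r.coeff a := by
      rw [MonoidAlgebra.coeff_single_mul_apply, one_mul, inv_mul_cancel_left]
    rw [hr g, MonoidAlgebra.coeff_smul_apply, smul_eq_mul] at h1
    have hra : r.coeff a ≠ 0 := Finsupp.mem_support_iff.1 ha
    have : r.coeff (g * a) ≠ 0 := by
      intro h0
      rw [h0, mul_zero] at h1
      exact hra h1.symm
    exact Finsupp.mem_support_iff.2 this
  have hinj : Function.Injective (fun g : π => g * a) :=
    fun x y hxy => mul_right_cancel hxy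
  exact (Set.infinite_of_injective_forall_mem (s := (↑r.coeff.support : Set π)) hinj
    (fun g => hmem g)) (r.coeff.support.finite_toSet)

theorem conj_single (w : π →* ℤˣ) (g : π) (c : ℤ) :
    conj w (MonoidAlgebra.single g c) =
      MonoidAlgebra.single g⁻¹ (c * (w g : ℤ)) := by
  have h1 : tau w (MonoidAlgebra.single g c) = c • (tauHom w g) :=
    MonoidAlgebra.lift_single _ _ _
  have h2 : tauHom w g = MulOpposite.op (MonoidAlgebra.single g⁻¹ ((w g : ℤ))) := rfl
  rw [conj, h1, h2, ← MulOpposite.op_smul, MulOpposite.unop_op,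
    MonoidAlgebra.smul_single']

theorem conj_add (w : π →* ℤˣ) (x y : MonoidAlgebra ℤ π) :
    conj w (x + y) = conj w x + conj w y := by
  simp [conj, map_add]

theorem conj_zsmul (w : π →* ℤˣ) (c : ℤ) (x : MonoidAlgebra ℤ π) :
    conj w (c • x) = c • conj w x := by
  rw [conj, conj, map_smul, MulOpposite.unop_smul]

theorem conj_mul' (w : π →* ℤˣ) (x y : MonoidAlgebra ℤ π) :
    conj w (x * y) = conj w y * conj w x := by
  simp [conj, map_mul]

theorem conj_conj (w : π →* ℤˣ) (x : MonoidAlgebra ℤ π) :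
    conj w (conj w x) = x := by
  induction x using MonoidAlgebra.induction_on with
  | of g =>
      rw [MonoidAlgebra.of_apply, conj_single, conj_single, inv_inv]
      have : (1 : ℤ) * (w g : ℤ) * ((w g⁻¹ : ℤˣ) : ℤ) = 1 := by
        rw [one_mul, map_inv, ← Units.val_mul, mul_inv_cancel, Units.val_one]
      rw [this]
  | add f g hf hg => rw [conj_add, conj_add, hf, hg]
  | smul r f hf => rw [conj_zsmul, conj_zsmul, hf]

/-- The key extension lemma: every `ℤπ`-linear functional on the twisted
augmentation ideal is right multiplication by a fixed element. -/
theorem exists_rep {π : Type} [Group π] [Infinite π] (v : π →* ℤˣ)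
    (hH1 : Subsingleton (groupCohomology (Rep.of (twistedRegular v)) 1))
    (f : ↥(twistedAugIdeal v) →ₗ[MonoidAlgebra ℤ π] MonoidAlgebra ℤ π) :
    ∃ x₀ : MonoidAlgebra ℤ π, ∀ y : ↥(twistedAugIdeal v), f y = (y : MonoidAlgebra ℤ π) * x₀ := by
  classical
  set d : π → MonoidAlgebra ℤ π :=
    fun g => ((v g : ℤ)) • f ⟨uElt v g, uElt_mem v g⟩ with hd
  have hfu : ∀ g h : π,
      f ⟨uElt v (g * h), uElt_mem v (g * h)⟩ =
        MonoidAlgebra.single g (1 : ℤ) * f ⟨uElt v h, uElt_mem v h⟩ +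
          ((v h : ℤ)) • f ⟨uElt v g, uElt_mem v g⟩ := by
    intro g h
    have hsub : (⟨uElt v (g * h), uElt_mem v (g * h)⟩ : ↥(twistedAugIdeal v)) =
        (MonoidAlgebra.single g (1 : ℤ)) • ⟨uElt v h, uElt_mem v h⟩ +
          ((v h : ℤ)) • ⟨uElt v g, uElt_mem v g⟩ := by
      apply Subtype.ext
      simpa [smul_eq_mul] using uElt_mul v g h
    rw [hsub, map_add, map_smul, map_zsmul, smul_eq_mul]
  have hρ : ∀ (g : π) (x : MonoidAlgebra ℤ π),
      (Rep.of (twistedRegular v)).ρ g x =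
        ((v g : ℤ)) • (MonoidAlgebra.single g (1 : ℤ) * x) := by
    intro g x
    show twistedRegular v g x = _
    simp [twistedRegular, MonoidAlgebra.of_apply]
  have hdcoc : d ∈ groupCohomology.cocycles₁ (Rep.of (twistedRegular v)) := by
    rw [groupCohomology.mem_cocycles₁_iff]
    intro g h
    have hv2 : ((v h : ℤ)) * ((v h : ℤ)) = 1 := by
      rw [← Units.val_mul, Int.units_mul_self, Units.val_one]
    rw [hρ g (d h)]
    simp only [hd]
    simp only [hfu g h, map_mul, Units.val_mul, smul_add, smul_smul, mul_smul_comm]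
    rw [mul_assoc, hv2, mul_one]
  haveI := hH1
  have hsub : Subsingleton (groupCohomology.H1 (Rep.of (twistedRegular v))) := by
    exact hH1
  have hbd : d ∈ groupCohomology.coboundaries₁ (Rep.of (twistedRegular v)) := by
    have h0 : groupCohomology.H1π (Rep.of (twistedRegular v))
        (⟨d, hdcoc⟩ : groupCohomology.cocycles₁ (Rep.of (twistedRegular v))) = 0 :=
      Subsingleton.elim _ _
    exact (groupCohomology.H1π_eq_zero_iff _).1 h0
  obtain ⟨x, hx0⟩ := hbd
  have hx : ∀ g : π, (Rep.of (twistedRegular v)).ρ g x - x = d g := fun g => by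
    rw [← hx0]; rfl
  change MonoidAlgebra ℤ π at x
  have hx' : ∀ g : π, ((v g : ℤ)) • (MonoidAlgebra.single g (1 : ℤ) * x) - x =
      ((v g : ℤ)) • f ⟨uElt v g, uElt_mem v g⟩ := by
    intro g
    have h := hx g
    rw [hρ g x] at h
    exact h
  have hfug : ∀ g : π, f ⟨uElt v g, uElt_mem v g⟩ = uElt v g * x := by
    intro g
    have hv2 : ((v g : ℤ)) * ((v g : ℤ)) = 1 := by
      rw [← Units.val_mul, Int.units_mul_self, Units.val_one]
    have h1 := hx' g
    have h2 := congrArg (fun z => ((v g : ℤ)) • z) h1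
    simp only [smul_sub, smul_smul, hv2, one_smul] at h2
    rw [uElt_mul_right]
    exact h2.symm
  refine ⟨x, fun y => ?_⟩
  have hle : Submodule.span ℤ (Set.range (uElt v)) ≤
      (twistedAugIdeal v).restrictScalars ℤ := by
    rw [Submodule.span_le]
    rintro _ ⟨g, rfl⟩
    exact uElt_mem v g
  have hy : (y : MonoidAlgebra ℤ π) ∈ Submodule.span ℤ (Set.range (uElt v)) :=
    mem_span_uElt v y.2
  have main : ∀ (z : MonoidAlgebra ℤ π),
      z ∈ Submodule.span ℤ (Set.range (uElt v)) →
      ∀ h : z ∈ twistedAugIdeal v, f ⟨z, h⟩ = z * x := by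
    intro z hz
    induction hz using Submodule.span_induction with
    | mem z hzr =>
        obtain ⟨g, rfl⟩ := hzr
        intro h
        exact hfug g
    | zero =>
        intro h
        rw [show (⟨0, h⟩ : ↥(twistedAugIdeal v)) = 0 from rfl, map_zero, zero_mul]
    | add z₁ z₂ h₁ h₂ ih₁ ih₂ =>
        intro h
        rw [show (⟨z₁ + z₂, h⟩ : ↥(twistedAugIdeal v)) =
            ⟨z₁, (Submodule.restrictScalars_mem ℤ _ _).1 (hle h₁)⟩ + ⟨z₂, (Submodule.restrictScalars_mem ℤ _ _).1 (hle h₂)⟩ from rfl, map_add, ih₁ _, ih₂ _, add_mul]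
    | smul c z hz ih =>
        intro h
        rw [show (⟨c • z, h⟩ : ↥(twistedAugIdeal v)) =
            c • (⟨z, (Submodule.restrictScalars_mem ℤ _ _).1 (hle hz)⟩ : ↥(twistedAugIdeal v)) from rfl,
          map_zsmul, ih _, smul_mul_assoc]
  exact main _ hy y.2

end Aux

/-- Let `π` be an infinite group, `v : π → {±1}` a homomorphism with
`H¹(π; ℤπ^v) = 0`, and `w : π → {±1}` a fixed homomorphism (used for the `w`-twisted
involution `g ↦ w(g)g⁻¹` making the dual a left module).  Then the `w`-twisted dual
`(Iπ^v)^† = Hom_{ℤπ}(Iπ^v, ℤπ)` is isomorphic to `ℤπ` as a left `ℤπ`-module: there is an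
additive bijection `e` intertwining the twisted dual action `(g • f)(x) = f(x)·w(g)g⁻¹`
with the left regular action. -/
theorem twisted_dual_of_twisted_augIdeal_free {π : Type} [Group π] [Infinite π]
    (v w : π →* ℤˣ)
    (hH1 : Subsingleton (groupCohomology (Rep.of (twistedRegular v)) 1)) :
    ∃ e : (↥(twistedAugIdeal v) →ₗ[MonoidAlgebra ℤ π] MonoidAlgebra ℤ π) ≃+
        MonoidAlgebra ℤ π,
      ∀ (g : π) (f : ↥(twistedAugIdeal v) →ₗ[MonoidAlgebra ℤ π] MonoidAlgebra ℤ π),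
        e ((LinearMap.toSpanSingleton (MonoidAlgebra ℤ π) (MonoidAlgebra ℤ π)
              (MonoidAlgebra.single g⁻¹ ((w g : ℤ)))).comp f) =
          MonoidAlgebra.of ℤ π g * e f := by
  classical
  -- the map `r ↦ (y ↦ y * conj w r)`
  set Φ : MonoidAlgebra ℤ π →+
      (↥(twistedAugIdeal v) →ₗ[MonoidAlgebra ℤ π] MonoidAlgebra ℤ π) :=
    { toFun := fun r =>
        (LinearMap.toSpanSingleton (MonoidAlgebra ℤ π) (MonoidAlgebra ℤ π)
          (conj w r)).comp (twistedAugIdeal v).subtype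
      map_zero' := by
        ext y
        simp [conj, LinearMap.toSpanSingleton_apply]
      map_add' := by
        intro r s
        ext y
        simp [conj_add, mul_add, LinearMap.toSpanSingleton_apply, smul_eq_mul] } with hΦ
  have hΦ_apply : ∀ (r : MonoidAlgebra ℤ π) (y : ↥(twistedAugIdeal v)),
      Φ r y = (y : MonoidAlgebra ℤ π) * conj w r := by
    intro r y
    show ((LinearMap.toSpanSingleton (MonoidAlgebra ℤ π) (MonoidAlgebra ℤ π)
      (conj w r)).comp (twistedAugIdeal v).subtype) y = _
    rw [LinearMap.comp_apply, LinearMap.toSpanSingleton_apply, smul_eq_mul]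
    rfl
  have hconj_inj : Function.Injective (conj w) :=
    Function.LeftInverse.injective (conj_conj w)
  have hinj : Function.Injective Φ := by
    intro r s hrs
    have h0 : ∀ y : ↥(twistedAugIdeal v),
        (y : MonoidAlgebra ℤ π) * conj w r = (y : MonoidAlgebra ℤ π) * conj w s := by
      intro y
      rw [← hΦ_apply, ← hΦ_apply, hrs]
    set t := conj w r - conj w s with ht
    have htz : ∀ g : π, MonoidAlgebra.single g (1 : ℤ) * t = ((v g : ℤ)) • t := by
      intro g
      have := h0 ⟨uElt v g, uElt_mem v g⟩
      have h1 : uElt v g * t = 0 := by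
        simp only [ht, mul_sub]
        rw [sub_eq_zero]
        exact this
      rw [uElt_mul_right, sub_eq_zero] at h1
      exact h1
    have : t = 0 := eq_zero_of_forall_single_mul v htz
    have : conj w r = conj w s := by
      rwa [ht, sub_eq_zero] at this
    exact hconj_inj this
  have hsurj : Function.Surjective Φ := by
    intro f
    obtain ⟨x₀, hx₀⟩ := exists_rep v hH1 f
    refine ⟨conj w x₀, ?_⟩
    ext y
    rw [hΦ_apply, conj_conj, ← hx₀]
  set e : (↥(twistedAugIdeal v) →ₗ[MonoidAlgebra ℤ π] MonoidAlgebra ℤ π) ≃+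
      MonoidAlgebra ℤ π :=
    (AddEquiv.ofBijective Φ ⟨hinj, hsurj⟩).symm with he
  have heΦ : ∀ r, e (Φ r) = r := fun r =>
    (AddEquiv.ofBijective Φ ⟨hinj, hsurj⟩).symm_apply_apply r
  have hΦe : ∀ f, Φ (e f) = f := fun f =>
    (AddEquiv.ofBijective Φ ⟨hinj, hsurj⟩).apply_symm_apply f
  refine ⟨e, fun g f => ?_⟩
  have key : (LinearMap.toSpanSingleton (MonoidAlgebra ℤ π) (MonoidAlgebra ℤ π)
      (MonoidAlgebra.single g⁻¹ ((w g : ℤ)))).comp f =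
      Φ (MonoidAlgebra.of ℤ π g * e f) := by
    ext y
    have h1 : f y = Φ (e f) y := by rw [hΦe]
    rw [LinearMap.comp_apply, LinearMap.toSpanSingleton_apply, smul_eq_mul, h1,
      hΦ_apply, hΦ_apply]
    rw [MonoidAlgebra.of_apply, conj_mul', conj_single, one_mul, mul_assoc]
  rw [key, heΦ]

end Paper
end

section
/- Let π = Z × Z/2 = ⟨t, T | [T,t], T²⟩ and let v' : π → {±1} send t ↦ 1, T ↦ −1. The element 1 ⊗ (1−t) is nonzero in Z ⊗_{Zπ} Iπ^{v'}, and generates a Z/2 subgroup: the natural exact sequence 0 → Tor₁^{Zπ}(Z, Z^{v'}) → Z ⊗_{Zπ} Iπ^{v'} → Z identifies 1 ⊗ (1−t) with the image of the generator of Tor₁^{Zπ}(Z, Z^{v'}) ≅ Z/2. -/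
open scoped TensorProduct

namespace Paper

variable {π G H : Type*} [Group π] [Group G] [Group H]

/-- The group `π = ℤ × ℤ/2`, written multiplicatively, with generators `t = (1,0)` and
`T = (0,1)`. -/
abbrev PiZxZ2 : Type := Multiplicative (ℤ × ZMod 2)

/-- The generator `t` of the `ℤ`-factor. -/
def tGen : PiZxZ2 := Multiplicative.ofAdd ((1 : ℤ), (0 : ZMod 2))

/-- The generator `T` of the `ℤ/2`-factor. -/
def TGen : PiZxZ2 := Multiplicative.ofAdd ((0 : ℤ), (1 : ZMod 2))

/-- The sign character of `ℤ/2`. -/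
def sgn2 : Multiplicative (ZMod 2) →* ℤˣ where
  toFun x := (-1) ^ (x.toAdd.val)
  map_one' := by decide
  map_mul' := by decide

/-- The character `v' : ℤ × ℤ/2 → {±1}` with `v'(t) = 1` and `v'(T) = −1`. -/
def vprime : PiZxZ2 →* ℤˣ :=
  sgn2.comp (AddMonoidHom.toMultiplicative (AddMonoidHom.snd ℤ (ZMod 2)))

/-- The relations defining the coinvariants `ℤ ⊗_{ℤπ} Iπ^{v'}` of the twisted
augmentation ideal (for the trivial twisting on the `ℤ`-factor of the tensor product). -/
noncomputable def coinvRel : Submodule ℤ (MonoidAlgebra ℤ PiZxZ2) :=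
  Submodule.span ℤ
    {x | ∃ (g : PiZxZ2) (m : MonoidAlgebra ℤ PiZxZ2), m ∈ twistedAugIdeal vprime ∧
      x = MonoidAlgebra.of ℤ PiZxZ2 g • m - m}

/-- Weight function `g ↦ (first coordinate of g) mod 2`. -/
noncomputable def wt : PiZxZ2 → ZMod 2 := fun g => ((Multiplicative.toAdd g).1 : ZMod 2)

/-- The detecting functional `Σ a_g g ↦ Σ a_g · wt g`. -/
noncomputable def phiDet : MonoidAlgebra ℤ PiZxZ2 →ₗ[ℤ] ZMod 2 :=
  Finsupp.lsum ℤ (fun g => LinearMap.toSpanSingleton ℤ (ZMod 2) (wt g)) ∘ₗ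
    (MonoidAlgebra.coeffLinearEquiv ℤ).toLinearMap

/-- The mod-2 augmentation `Σ a_g g ↦ Σ a_g`. -/
noncomputable def sigDet : MonoidAlgebra ℤ PiZxZ2 →ₗ[ℤ] ZMod 2 :=
  Finsupp.lsum ℤ (fun _ => LinearMap.toSpanSingleton ℤ (ZMod 2) 1) ∘ₗ
    (MonoidAlgebra.coeffLinearEquiv ℤ).toLinearMap

lemma phiDet_single (g : PiZxZ2) (a : ℤ) :
    phiDet (MonoidAlgebra.single g a) = a • wt g :=
  Finsupp.lsum_single ℤ _ g a

lemma sigDet_single (g : PiZxZ2) (a : ℤ) :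
    sigDet (MonoidAlgebra.single g a) = (a : ZMod 2) := by
  have h : sigDet (MonoidAlgebra.single g a)
      = LinearMap.toSpanSingleton ℤ (ZMod 2) 1 a :=
    Finsupp.lsum_single ℤ _ g a
  rw [h, LinearMap.toSpanSingleton_apply, zsmul_one]

lemma twistedAug_single_s14 (g : PiZxZ2) (a : ℤ) :
    twistedAug vprime (MonoidAlgebra.single g a) = a * (vprime g : ℤ) := by
  have h := MonoidAlgebra.lift_single ((Units.coeHom ℤ).comp vprime) g a
  rw [twistedAug]
  erw [h]
  simp [smul_eq_mul]

lemma sigDet_eq_zero_of_mem {m : MonoidAlgebra ℤ PiZxZ2}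
    (hm : m ∈ twistedAugIdeal vprime) : sigDet m = 0 := by
  have key : sigDet =
      ((Int.castAddHom (ZMod 2)).toIntLinearMap.comp
        (twistedAug vprime).toLinearMap) := by
    refine MonoidAlgebra.lhom_ext' fun g => LinearMap.ext fun a => ?_
    simp only [LinearMap.comp_apply, MonoidAlgebra.lsingle_apply]
    have h2 : ((vprime g : ℤ) : ZMod 2) = 1 := by
      rcases Int.units_eq_one_or (vprime g) with h | h <;> rw [h] <;> decide
    have lhs : sigDet (MonoidAlgebra.single g a) = (a : ZMod 2) := sigDet_single g a
    have rhs : ((Int.castAddHom (ZMod 2)).toIntLinearMap.comp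
        (twistedAug vprime).toLinearMap) (MonoidAlgebra.single g a)
        = ((a * (vprime g : ℤ) : ℤ) : ZMod 2) := by
      rw [LinearMap.comp_apply, AddMonoidHom.coe_toIntLinearMap, AlgHom.toLinearMap_apply,
        twistedAug_single_s14]
      simp
    erw [lhs, rhs]
    push_cast [h2]
    ring
  have hz : twistedAug vprime m = 0 := hm
  rw [key]
  simp [hz]

lemma wt_mul (g h : PiZxZ2) : wt (g * h) = wt g + wt h := by
  simp [wt, Int.cast_add]

lemma phiDet_smul (g : PiZxZ2) (m : MonoidAlgebra ℤ PiZxZ2) :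
    phiDet (MonoidAlgebra.of ℤ PiZxZ2 g • m) = phiDet m + wt g * sigDet m := by
  have key : phiDet.comp (smulMap (MonoidAlgebra.of ℤ PiZxZ2 g) (MonoidAlgebra ℤ PiZxZ2))
      = phiDet + wt g • sigDet := by
    refine MonoidAlgebra.lhom_ext' fun h => LinearMap.ext fun a => ?_
    simp only [LinearMap.comp_apply, MonoidAlgebra.lsingle_apply]
    have hsingle : MonoidAlgebra.of ℤ PiZxZ2 g • (MonoidAlgebra.single h a)
        = MonoidAlgebra.single (g * h) a := by
      rw [smul_eq_mul, MonoidAlgebra.of_apply, MonoidAlgebra.single_mul_single, one_mul]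
    have lhs : phiDet.comp (smulMap (MonoidAlgebra.of ℤ PiZxZ2 g) (MonoidAlgebra ℤ PiZxZ2))
        (MonoidAlgebra.single h a) = a • wt (g * h) := by
      rw [LinearMap.comp_apply]
      have : smulMap (MonoidAlgebra.of ℤ PiZxZ2 g) (MonoidAlgebra ℤ PiZxZ2)
          (MonoidAlgebra.single h a) = MonoidAlgebra.single (g * h) a := by
        rw [smulMap]
        erw [AddMonoidHom.coe_toIntLinearMap, DistribMulAction.toAddMonoidHom_apply]
        exact hsingle
      rw [this, phiDet_single]
    have rhs : (phiDet + wt g • sigDet) (MonoidAlgebra.single h a)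
        = a • wt h + wt g * (a : ZMod 2) := by
      rw [LinearMap.add_apply, LinearMap.smul_apply, phiDet_single, sigDet_single,
        smul_eq_mul]
    erw [lhs, rhs]
    rw [wt_mul, smul_add]
    simp only [zsmul_eq_mul]
    ring
  have hkey := congrArg (fun f : MonoidAlgebra ℤ PiZxZ2 →ₗ[ℤ] ZMod 2 => f m) key
  simp only [LinearMap.comp_apply, LinearMap.add_apply, LinearMap.smul_apply,
    smul_eq_mul] at hkey
  rw [← hkey, smulMap]
  rfl

lemma phiDet_coinvRel {x : MonoidAlgebra ℤ PiZxZ2} (hx : x ∈ coinvRel) :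
    phiDet x = 0 := by
  have : coinvRel ≤ LinearMap.ker phiDet := by
    rw [coinvRel, Submodule.span_le]
    rintro y ⟨g, m, hm, rfl⟩
    simp only [SetLike.mem_coe, LinearMap.mem_ker, map_sub, phiDet_smul,
      sigDet_eq_zero_of_mem hm, mul_zero, add_zero, sub_self]
  exact this hx

lemma one_add_T_mem : ((1 : MonoidAlgebra ℤ PiZxZ2) + MonoidAlgebra.of ℤ PiZxZ2 TGen) ∈
    twistedAugIdeal vprime := by
  show twistedAug vprime _ = 0
  rw [map_add, map_one]
  have h1 : twistedAug vprime (MonoidAlgebra.of ℤ PiZxZ2 TGen) = ((vprime TGen : ℤ)) := by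
    rw [MonoidAlgebra.of_apply]
    erw [twistedAug_single_s14]
    rw [one_mul]
  rw [h1]
  have : vprime TGen = -1 := by decide
  rw [this]; simp

lemma one_sub_t_mem : ((1 : MonoidAlgebra ℤ PiZxZ2) - MonoidAlgebra.of ℤ PiZxZ2 tGen) ∈
    twistedAugIdeal vprime := by
  show twistedAug vprime _ = 0
  rw [map_sub, map_one]
  have h1 : twistedAug vprime (MonoidAlgebra.of ℤ PiZxZ2 tGen) = ((vprime tGen : ℤ)) := by
    rw [MonoidAlgebra.of_apply]
    erw [twistedAug_single_s14]
    rw [one_mul]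
  rw [h1]
  have : vprime tGen = 1 := by decide
  rw [this]; simp

/-- For `π = ℤ × ℤ/2` and `v'` with `v'(t) = 1`, `v'(T) = −1`: the
element `1 ⊗ (1−t)` of `ℤ ⊗_{ℤπ} Iπ^{v'}` is nonzero and generates a `ℤ/2`-subgroup.
Concretely: `1 − t` lies in `Iπ^{v'}`, its class modulo the coinvariance relations is
nonzero, and twice it lies in the relations (it is identified with the image of the
generator of `Tor₁^{ℤπ}(ℤ, ℤ^{v'}) ≅ ℤ/2`). -/
theorem one_sub_t_order_two :
    ((1 : MonoidAlgebra ℤ PiZxZ2) - MonoidAlgebra.of ℤ PiZxZ2 tGen) ∈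
        twistedAugIdeal vprime ∧
    ((1 : MonoidAlgebra ℤ PiZxZ2) - MonoidAlgebra.of ℤ PiZxZ2 tGen) ∉ coinvRel ∧
    (2 : ℤ) • ((1 : MonoidAlgebra ℤ PiZxZ2) - MonoidAlgebra.of ℤ PiZxZ2 tGen) ∈
        coinvRel := by
  refine ⟨one_sub_t_mem, ?_, ?_⟩
  · intro h
    have h0 := phiDet_coinvRel h
    rw [map_sub] at h0
    have h1 : phiDet (1 : MonoidAlgebra ℤ PiZxZ2) = 0 := by
      rw [MonoidAlgebra.one_def, phiDet_single]
      have : wt (1 : PiZxZ2) = 0 := by decide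
      rw [this]; simp
    have h2 : phiDet (MonoidAlgebra.of ℤ PiZxZ2 tGen) = 1 := by
      have := phiDet_single tGen 1
      have hw : wt tGen = 1 := by decide
      simpa [hw] using this
    rw [h1, h2] at h0
    exact absurd h0 (by decide)

  · set a := MonoidAlgebra.of ℤ PiZxZ2 tGen with ha
    set b := MonoidAlgebra.of ℤ PiZxZ2 TGen with hb
    have r1 : (b • ((1 : MonoidAlgebra ℤ PiZxZ2) - a) - ((1 : MonoidAlgebra ℤ PiZxZ2) - a))
        ∈ coinvRel :=
      Submodule.subset_span ⟨TGen, _, one_sub_t_mem, rfl⟩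
    have r2 : (a • ((1 : MonoidAlgebra ℤ PiZxZ2) + b) - ((1 : MonoidAlgebra ℤ PiZxZ2) + b))
        ∈ coinvRel :=
      Submodule.subset_span ⟨tGen, _, one_add_T_mem, rfl⟩
    have key : (2 : ℤ) • ((1 : MonoidAlgebra ℤ PiZxZ2) - a)
        = (-1 : ℤ) • (b • ((1 : MonoidAlgebra ℤ PiZxZ2) - a) - ((1 : MonoidAlgebra ℤ PiZxZ2) - a))
          + (-1 : ℤ) • (a • ((1 : MonoidAlgebra ℤ PiZxZ2) + b)
            - ((1 : MonoidAlgebra ℤ PiZxZ2) + b)) := by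
      rw [smul_eq_mul, smul_eq_mul, zsmul_eq_mul, zsmul_eq_mul, zsmul_eq_mul]
      push_cast
      ring
    rw [key]
    exact Submodule.add_mem _ (Submodule.smul_mem _ _ r1) (Submodule.smul_mem _ _ r2)

end Paper
end

section
/- For π = Z × Z/2 and v' : π → {±1} with v'(t)=1, v'(T)=−1: the twisted augmentation ideal Iπ^{v'} is not a projective Zπ-module. -/
open scoped TensorProduct

namespace Paper

variable {π G H : Type*} [Group π] [Group G] [Group H]

section Stmt15Aux

open MonoidAlgebra Multiplicative

/-- The group ring `ℤ[ℤ × ℤ/2]`. -/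
local notation "Rg15" => MonoidAlgebra ℤ PiZxZ2
/-- The Laurent ring `ℤ[ℤ]`. -/
local notation "L15" => MonoidAlgebra ℤ (Multiplicative ℤ)
/-- The small ring `𝔽₂[ℤ/2]`. -/
local notation "A15" => MonoidAlgebra (ZMod 2) (Multiplicative (ZMod 2))

/-- The generator `t` of the `ℤ` factor. -/
def tpi : PiZxZ2 := Multiplicative.ofAdd (1, 0)
/-- The generator `T` of the `ℤ/2` factor. -/
def Tpi : PiZxZ2 := Multiplicative.ofAdd (0, 1)

noncomputable def d15 : MonoidAlgebra ℤ PiZxZ2 := MonoidAlgebra.of ℤ PiZxZ2 tpi - 1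
noncomputable def u15 : MonoidAlgebra ℤ PiZxZ2 := MonoidAlgebra.of ℤ PiZxZ2 Tpi + 1

lemma vprime_tpi : vprime tpi = 1 := by decide
lemma vprime_Tpi : vprime Tpi = -1 := by decide

lemma taug_of (g : PiZxZ2) : twistedAug vprime (MonoidAlgebra.of ℤ PiZxZ2 g) = (vprime g : ℤ) := by
  rw [twistedAug, MonoidAlgebra.lift_of]; rfl

lemma d15_mem : d15 ∈ twistedAugIdeal vprime := by
  rw [twistedAugIdeal, RingHom.mem_ker]
  show twistedAug vprime d15 = 0
  rw [d15, map_sub, map_one, taug_of, vprime_tpi]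
  simp

lemma u15_mem : u15 ∈ twistedAugIdeal vprime := by
  rw [twistedAugIdeal, RingHom.mem_ker]
  show twistedAug vprime u15 = 0
  rw [u15, map_add, map_one, taug_of, vprime_Tpi]
  simp

/-- The set of group elements `g` with `g ≡ v'(g)` modulo the ideal `(d15, u15)`,
as a subgroup. -/
noncomputable def K15 : Subgroup PiZxZ2 where
  carrier := {g | MonoidAlgebra.of ℤ PiZxZ2 g - ((vprime g : ℤ) : MonoidAlgebra ℤ PiZxZ2)
    ∈ Ideal.span {d15, u15}}
  one_mem' := by
    simp only [Set.mem_setOf_eq, map_one, Units.val_one, Int.cast_one, sub_self]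
    exact zero_mem _
  mul_mem' := by
    intro a b ha hb
    simp only [Set.mem_setOf_eq] at ha hb ⊢
    have h := Ideal.add_mem _ (Ideal.mul_mem_left _ (MonoidAlgebra.of ℤ PiZxZ2 a) hb)
      (Ideal.mul_mem_left _ (((vprime b : ℤ) : MonoidAlgebra ℤ PiZxZ2)) ha)
    have e : MonoidAlgebra.of ℤ PiZxZ2 (a * b)
        - ((vprime (a * b) : ℤ) : MonoidAlgebra ℤ PiZxZ2)
        = MonoidAlgebra.of ℤ PiZxZ2 a *
            (MonoidAlgebra.of ℤ PiZxZ2 b - ((vprime b : ℤ) : MonoidAlgebra ℤ PiZxZ2))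
          + ((vprime b : ℤ) : MonoidAlgebra ℤ PiZxZ2) *
            (MonoidAlgebra.of ℤ PiZxZ2 a - ((vprime a : ℤ) : MonoidAlgebra ℤ PiZxZ2)) := by
      rw [map_mul, map_mul]
      push_cast
      ring
    rw [e]
    exact h
  inv_mem' := by
    intro a ha
    simp only [Set.mem_setOf_eq] at ha ⊢
    have hv : ((vprime a⁻¹ : ℤ) : MonoidAlgebra ℤ PiZxZ2)
        * ((vprime a : ℤ) : MonoidAlgebra ℤ PiZxZ2) = 1 := by
      rw [← Int.cast_mul, ← Units.val_mul, ← map_mul, inv_mul_cancel, map_one, Units.val_one,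
        Int.cast_one]
    have ho : MonoidAlgebra.of ℤ PiZxZ2 a⁻¹ * MonoidAlgebra.of ℤ PiZxZ2 a = 1 := by
      rw [← map_mul, inv_mul_cancel, map_one]
    have h := Ideal.mul_mem_left _
      (-(((vprime a⁻¹ : ℤ) : MonoidAlgebra ℤ PiZxZ2)) * MonoidAlgebra.of ℤ PiZxZ2 a⁻¹) ha
    have e : MonoidAlgebra.of ℤ PiZxZ2 a⁻¹ - ((vprime a⁻¹ : ℤ) : MonoidAlgebra ℤ PiZxZ2)
        = (-(((vprime a⁻¹ : ℤ) : MonoidAlgebra ℤ PiZxZ2)) * MonoidAlgebra.of ℤ PiZxZ2 a⁻¹) *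
            (MonoidAlgebra.of ℤ PiZxZ2 a - ((vprime a : ℤ) : MonoidAlgebra ℤ PiZxZ2)) := by
      linear_combination ((vprime a⁻¹ : ℤ) : MonoidAlgebra ℤ PiZxZ2) * ho
        - MonoidAlgebra.of ℤ PiZxZ2 a⁻¹ * hv
    rw [e]
    exact h

lemma mem_K15 (g : PiZxZ2) : g ∈ K15 := by
  have htpi : tpi ∈ K15 := by
    show _ ∈ Ideal.span _
    rw [vprime_tpi]
    simpa [d15] using (Ideal.subset_span (by simp : d15 ∈ ({d15, u15} : Set _)))
  have hTpi : Tpi ∈ K15 := by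
    show _ ∈ Ideal.span _
    rw [vprime_Tpi]
    have : MonoidAlgebra.of ℤ PiZxZ2 Tpi - (((-1 : ℤˣ) : ℤ) : MonoidAlgebra ℤ PiZxZ2) = u15 := by
      rw [u15]; push_cast; ring
    rw [this]
    exact Ideal.subset_span (by simp)
  have hg : g = tpi ^ ((toAdd g).1) * Tpi ^ (((toAdd g).2).val) := by
    apply Multiplicative.toAdd.injective
    rw [toAdd_mul, toAdd_zpow, toAdd_pow]
    refine Prod.ext ?_ ?_
    · simp [tpi, Tpi]
    · simp [tpi, Tpi, ZMod.natCast_rightInverse (toAdd g).2]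
  rw [hg]
  exact mul_mem (zpow_mem htpi _) (pow_mem hTpi _)

lemma sub_aug_mem (x : MonoidAlgebra ℤ PiZxZ2) :
    x - ((twistedAug vprime x : ℤ) : MonoidAlgebra ℤ PiZxZ2) ∈ Ideal.span {d15, u15} := by
  induction x using MonoidAlgebra.induction_on with
  | of g =>
    rw [taug_of]
    exact mem_K15 g
  | add f g hf hg =>
    have h := Ideal.add_mem _ hf hg
    have e : f + g - ((twistedAug vprime (f + g) : ℤ) : MonoidAlgebra ℤ PiZxZ2)
        = (f - ((twistedAug vprime f : ℤ) : MonoidAlgebra ℤ PiZxZ2))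
          + (g - ((twistedAug vprime g : ℤ) : MonoidAlgebra ℤ PiZxZ2)) := by
      rw [map_add]; push_cast; ring
    rw [e]; exact h
  | smul r f hf =>
    have h := Ideal.mul_mem_left _ ((r : MonoidAlgebra ℤ PiZxZ2)) hf
    have e : r • f - ((twistedAug vprime (r • f) : ℤ) : MonoidAlgebra ℤ PiZxZ2)
        = (r : MonoidAlgebra ℤ PiZxZ2)
          * (f - ((twistedAug vprime f : ℤ) : MonoidAlgebra ℤ PiZxZ2)) := by
      rw [map_smul, Algebra.smul_def, Algebra.smul_def]
      simp only [algebraMap_int_eq, eq_intCast]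
      push_cast
      ring
    rw [e]; exact h

lemma ker_le_span {x : MonoidAlgebra ℤ PiZxZ2} (hx : x ∈ twistedAugIdeal vprime) :
    x ∈ Ideal.span {d15, u15} := by
  have hx0 : twistedAug vprime x = 0 := by
    rw [twistedAugIdeal, RingHom.mem_ker] at hx
    exact hx
  have h := sub_aug_mem x
  rw [hx0] at h
  simpa using h

/-- The character `π → ℤ[ℤ]` sending `g = (a, b)` to `v'(g) · t^a`. -/
noncomputable def f15 : PiZxZ2 →* MonoidAlgebra ℤ (Multiplicative ℤ) :=
  ((MonoidAlgebra.of ℤ (Multiplicative ℤ)).comp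
      (AddMonoidHom.toMultiplicative (AddMonoidHom.fst ℤ (ZMod 2)))) *
  ((Int.castRingHom (MonoidAlgebra ℤ (Multiplicative ℤ))).toMonoidHom.comp
      ((Units.coeHom ℤ).comp vprime))

noncomputable def phi15 : MonoidAlgebra ℤ PiZxZ2 →ₐ[ℤ] MonoidAlgebra ℤ (Multiplicative ℤ) :=
  MonoidAlgebra.lift ℤ (MonoidAlgebra ℤ (Multiplicative ℤ)) PiZxZ2 f15

noncomputable def rho15 : MonoidAlgebra ℤ (Multiplicative ℤ) →ₐ[ℤ] ZMod 2 :=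
  MonoidAlgebra.lift ℤ (ZMod 2) (Multiplicative ℤ) 1

noncomputable def chi15 : MonoidAlgebra ℤ PiZxZ2 →ₐ[ℤ] ZMod 2 :=
  MonoidAlgebra.lift ℤ (ZMod 2) PiZxZ2 1

noncomputable def g15 : PiZxZ2 →* MonoidAlgebra (ZMod 2) (Multiplicative (ZMod 2)) :=
  (MonoidAlgebra.of (ZMod 2) (Multiplicative (ZMod 2))).comp
    (AddMonoidHom.toMultiplicative (AddMonoidHom.snd ℤ (ZMod 2)))

noncomputable def psi15 :
    MonoidAlgebra ℤ PiZxZ2 →ₐ[ℤ] MonoidAlgebra (ZMod 2) (Multiplicative (ZMod 2)) :=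
  MonoidAlgebra.lift ℤ (MonoidAlgebra (ZMod 2) (Multiplicative (ZMod 2))) PiZxZ2 g15

noncomputable def aug15 :
    MonoidAlgebra (ZMod 2) (Multiplicative (ZMod 2)) →ₐ[ZMod 2] ZMod 2 :=
  MonoidAlgebra.lift (ZMod 2) (ZMod 2) (Multiplicative (ZMod 2)) 1

lemma phi_of (g : PiZxZ2) :
    phi15 (MonoidAlgebra.of ℤ PiZxZ2 g)
      = MonoidAlgebra.of ℤ (Multiplicative ℤ) (Multiplicative.ofAdd ((toAdd g).1))
        * ((vprime g : ℤ) : MonoidAlgebra ℤ (Multiplicative ℤ)) := by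
  rw [phi15, MonoidAlgebra.lift_of]
  rfl

lemma phi_u : phi15 u15 = 0 := by
  rw [u15, map_add, map_one, phi_of, vprime_Tpi]
  have h1 : (toAdd Tpi).1 = 0 := rfl
  rw [h1]
  simp [MonoidAlgebra.one_def]

lemma phi_d : phi15 d15
    = MonoidAlgebra.of ℤ (Multiplicative ℤ) (Multiplicative.ofAdd (1 : ℤ)) - 1 := by
  rw [d15, map_sub, map_one, phi_of, vprime_tpi]
  have h1 : (toAdd tpi).1 = 1 := rfl
  rw [h1]
  simp

lemma phi_d_ne : phi15 d15 ≠ 0 := by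
  rw [phi_d]
  intro h
  have h2 := sub_eq_zero.mp h
  have h3 : Multiplicative.ofAdd (1 : ℤ) = (1 : Multiplicative ℤ) :=
    MonoidAlgebra.of_injective (by rw [h2, map_one])
  exact absurd h3 (by decide)

lemma rho_phi (x : MonoidAlgebra ℤ PiZxZ2) : rho15 (phi15 x) = chi15 x := by
  have h : rho15.comp phi15 = chi15 := by
    refine MonoidAlgebra.algHom_ext (fun g => ?_) (Subsingleton.elim _ _)
    rw [← MonoidAlgebra.of_apply, AlgHom.comp_apply, phi_of, map_mul, map_intCast]
    rw [rho15, chi15, MonoidAlgebra.lift_of, MonoidAlgebra.lift_of]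
    rcases Int.units_eq_one_or (vprime g) with h | h <;> rw [h] <;> simp <;> decide
  exact DFunLike.congr_fun h x

lemma psi_of (g : PiZxZ2) :
    psi15 (MonoidAlgebra.of ℤ PiZxZ2 g)
      = MonoidAlgebra.of (ZMod 2) (Multiplicative (ZMod 2))
          (Multiplicative.ofAdd ((toAdd g).2)) := by
  rw [psi15, MonoidAlgebra.lift_of]
  rfl

lemma psi_d : psi15 d15 = 0 := by
  rw [d15, map_sub, map_one, psi_of]
  have h1 : Multiplicative.ofAdd ((toAdd tpi).2) = (1 : Multiplicative (ZMod 2)) := rfl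
  rw [h1, map_one, sub_self]

lemma psi_u : psi15 u15
    = MonoidAlgebra.of (ZMod 2) (Multiplicative (ZMod 2))
        (Multiplicative.ofAdd (1 : ZMod 2)) + 1 := by
  rw [u15, map_add, map_one, psi_of]
  rfl

lemma aug_psi (x : MonoidAlgebra ℤ PiZxZ2) : aug15 (psi15 x) = chi15 x := by
  have h : aug15.toRingHom.comp psi15.toRingHom = chi15.toRingHom := by
    apply MonoidAlgebra.ringHom_ext
    · intro b
      simp only [RingHom.coe_comp, Function.comp_apply, AlgHom.toRingHom_eq_coe,
        RingHom.coe_coe]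
      rw [psi15, chi15, MonoidAlgebra.lift_single, MonoidAlgebra.lift_single]
      rw [map_zsmul]
      simp
    · intro a
      simp only [RingHom.coe_comp, Function.comp_apply, AlgHom.toRingHom_eq_coe,
        RingHom.coe_coe]
      rw [psi15, chi15, MonoidAlgebra.lift_single, MonoidAlgebra.lift_single, one_smul, one_smul]
      rw [show g15 a = MonoidAlgebra.single (Multiplicative.ofAdd ((Multiplicative.toAdd a).2))
        (1 : ZMod 2) from rfl]
      rw [aug15, MonoidAlgebra.lift_single]
      simp
  exact DFunLike.congr_fun h x

lemma aug15_eq_zero {z : MonoidAlgebra (ZMod 2) (Multiplicative (ZMod 2))}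
    (h : z * (MonoidAlgebra.of (ZMod 2) (Multiplicative (ZMod 2))
        (Multiplicative.ofAdd (1 : ZMod 2)) + 1) = 0) :
    aug15 z = 0 := by
  set Tg : Multiplicative (ZMod 2) := Multiplicative.ofAdd (1 : ZMod 2) with hTg
  have hcoef : z.coeff 1 + z.coeff Tg = 0 := by
    have h1 := congrArg
      (fun w : MonoidAlgebra (ZMod 2) (Multiplicative (ZMod 2)) => w.coeff (1 : Multiplicative (ZMod 2))) h
    rw [mul_add, mul_one] at h1
    rw [MonoidAlgebra.of_apply] at h1
    rw [MonoidAlgebra.coeff_add, Finsupp.add_apply] at h1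
    rw [MonoidAlgebra.coeff_mul_single_apply] at h1
    have hTinv : (1 : Multiplicative (ZMod 2)) * Tg⁻¹ = Tg := by decide
    rw [hTinv, mul_one] at h1
    simpa [add_comm] using h1
  have hall : ∀ g : Multiplicative (ZMod 2), g = 1 ∨ g = Multiplicative.ofAdd (1 : ZMod 2) := by
    decide
  have hz : z = MonoidAlgebra.single (1 : Multiplicative (ZMod 2)) (z.coeff 1)
      + MonoidAlgebra.single Tg (z.coeff Tg) := by
    apply MonoidAlgebra.ext
    ext g
    rcases hall g with rfl | hgT
    · rw [MonoidAlgebra.coeff_add, Finsupp.add_apply, MonoidAlgebra.coeff_single,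
        MonoidAlgebra.coeff_single, Finsupp.single_apply, Finsupp.single_apply]
      rw [if_pos rfl, if_neg (by decide : ¬ Tg = (1 : Multiplicative (ZMod 2)))]
      simp
    · rw [hgT, ← hTg, MonoidAlgebra.coeff_add, Finsupp.add_apply, MonoidAlgebra.coeff_single,
        MonoidAlgebra.coeff_single, Finsupp.single_apply, Finsupp.single_apply]
      rw [if_neg (by decide : ¬ (1 : Multiplicative (ZMod 2)) = Tg), if_pos rfl]
      simp
  rw [hz, map_add, aug15, MonoidAlgebra.lift_single, MonoidAlgebra.lift_single]
  simpa using hcoef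

end Stmt15Aux


/-- For `π = ℤ × ℤ/2` and `v'` as above, the twisted augmentation ideal
`Iπ^{v'}` is not a projective `ℤπ`-module. -/
theorem twistedAugIdeal_not_projective :
    ¬ Module.Projective (MonoidAlgebra ℤ PiZxZ2) ↥(twistedAugIdeal vprime) := by
  intro hproj
  obtain ⟨s, hs⟩ := Module.projective_def.mp hproj
  have hdJ : d15 ∈ twistedAugIdeal vprime := d15_mem
  have huJ : u15 ∈ twistedAugIdeal vprime := u15_mem
  let D : ↥(twistedAugIdeal vprime) := ⟨d15, hdJ⟩
  let U : ↥(twistedAugIdeal vprime) := ⟨u15, huJ⟩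
  have hDU : d15 • U = u15 • D := by
    apply Subtype.ext
    show d15 • (u15 : MonoidAlgebra ℤ PiZxZ2) = u15 • (d15 : MonoidAlgebra ℤ PiZxZ2)
    simp [smul_eq_mul, mul_comm]
  have hFG : ∀ j : ↥(twistedAugIdeal vprime), d15 * (s U) j = u15 * (s D) j := by
    intro j
    have h3 : d15 • s U = u15 • s D := by
      rw [← map_smul, ← map_smul, hDU]
    have h4 := DFunLike.congr_fun h3 j
    simpa [Finsupp.smul_apply, smul_eq_mul] using h4
  have hchiF : ∀ j : ↥(twistedAugIdeal vprime), chi15 ((s D) j) = 0 := by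
    intro j
    have hψ : psi15 ((s D) j)
        * (MonoidAlgebra.of (ZMod 2) (Multiplicative (ZMod 2))
            (Multiplicative.ofAdd (1 : ZMod 2)) + 1) = 0 := by
      rw [← psi_u, ← map_mul, mul_comm ((s D) j) u15, ← hFG j, map_mul, psi_d, zero_mul]
    rw [← aug_psi]
    exact aug15_eq_zero hψ
  have hmain : d15 = ∑ j ∈ (s D).support, (s D) j * (j : MonoidAlgebra ℤ PiZxZ2) := by
    conv_lhs => rw [show d15 = (D : MonoidAlgebra ℤ PiZxZ2) from rfl, ← hs D]
    rw [Finsupp.linearCombination_apply, Finsupp.sum, AddSubmonoidClass.coe_finset_sum]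
    exact Finset.sum_congr rfl fun j _ => by simp [smul_eq_mul]
  choose a b hab using fun j : ↥(twistedAugIdeal vprime) =>
    Ideal.mem_span_pair.mp (ker_le_span j.2)
  have hphi : phi15 d15
      = (∑ j ∈ (s D).support, phi15 ((s D) j) * phi15 (a j)) * phi15 d15 := by
    conv_lhs => rw [hmain]
    rw [map_sum, Finset.sum_mul]
    refine Finset.sum_congr rfl fun j _ => ?_
    rw [map_mul, ← hab j, map_add, map_mul, map_mul, phi_u, mul_zero, add_zero, mul_assoc]
  have hc1 : (∑ j ∈ (s D).support, phi15 ((s D) j) * phi15 (a j)) = 1 := by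
    have h0 : ((∑ j ∈ (s D).support, phi15 ((s D) j) * phi15 (a j)) - 1) * phi15 d15 = 0 := by
      rw [sub_mul, one_mul, ← hphi, sub_self]
    rcases mul_eq_zero.mp h0 with h | h
    · exact sub_eq_zero.mp h
    · exact absurd h phi_d_ne
  have hfinal : (1 : ZMod 2) = 0 := by
    calc (1 : ZMod 2) = rho15 (∑ j ∈ (s D).support, phi15 ((s D) j) * phi15 (a j)) := by
          rw [hc1, map_one]
    _ = ∑ j ∈ (s D).support, chi15 ((s D) j) * chi15 (a j) := by
          rw [map_sum]
          exact Finset.sum_congr rfl fun j _ => by rw [map_mul, rho_phi, rho_phi]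
    _ = 0 := Finset.sum_eq_zero fun j _ => by rw [hchiF j, zero_mul]
  exact one_ne_zero hfinal


end Paper
end
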